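/- arXiv:1707.08379 — 6 statements merged into one kernel-verified Lean document; each statement's English description precedes it below -/
import Mathlib

section
/- Let X be a real normed space with dual X*, let f : X → ℝ be convex and Gâteaux differentiable with gradient ∇f : X → X*, and let f*(x*) = sup_{x ∈ X}(⟨x*, x⟩ − f(x)). Let x, w ∈ X, β ∈ (0,1), and suppose ρ : [0,∞) → [0,∞) satisfies f*(βa + (1−β)b) ≤ β f*(a) + (1−β) f*(b) − β(1−β) ρ(‖a − b‖) for the elements a = ∇f(x), b = ∇f(w). Suppose y ∈ X satisfies ∇f(y) = β ∇f(x) + (1 − β) ∇f(w), and let p ∈ X be such that D_f(p, w) ≤ D_f(p, x). Then D_f(p, y) ≤ D_f(p, x) − β(1 − β) ρ(‖∇f(x) − ∇f(w)‖); in particular D_f(p, y) ≤ D_f(p, x). -/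
open Filter Topology

/-- The Bregman distance associated with `f` and its gradient map `gf`. -/
noncomputable def Df {X : Type*} [NormedAddCommGroup X] [NormedSpace ℝ X]
    (f : X → ℝ) (gf : X → X →L[ℝ] ℝ) (y x : X) : ℝ :=
  f y - f x - gf x (y - x)

/-- The convex conjugate of `f`. -/
noncomputable def fconj {X : Type*} [NormedAddCommGroup X] [NormedSpace ℝ X]
    (f : X → ℝ) (p : X →L[ℝ] ℝ) : ℝ :=
  sSup (Set.range fun x => p x - f x)

/-- Subgradient inequality for a convex Gâteaux differentiable function. -/
lemma subgrad_ineq {X : Type*} [NormedAddCommGroup X] [NormedSpace ℝ X]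
    (f : X → ℝ) (gf : X → X →L[ℝ] ℝ) (hconv : ConvexOn ℝ Set.univ f)
    (hgf : ∀ p v : X, HasLineDerivAt ℝ f (gf p v) p v) (z v : X) :
    f z + gf z v ≤ f (z + v) := by
  set g : ℝ → ℝ := fun t => f (z + t • v) with hg
  have hgconv : ConvexOn ℝ Set.univ g := by
    have := hconv.comp_affineMap (AffineMap.lineMap z (z + v))
    have heq : g = f ∘ (AffineMap.lineMap z (z + v)) := by
      funext t
      simp [g, AffineMap.lineMap_apply, add_sub_cancel_left, add_comm]
    rw [heq]
    simpa using this
  have hd : HasDerivAt g (gf z v) 0 := by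
    have := hgf z v
    simpa [HasLineDerivAt, g] using this
  have := hgconv.le_slope_of_hasDerivAt (Set.mem_univ (0:ℝ)) (Set.mem_univ (1:ℝ))
    one_pos hd
  have hslope : slope g 0 1 = f (z + v) - f z := by
    simp [slope, g]
  rw [hslope] at this
  linarith

/-- Fenchel equality. -/
lemma fenchel_eq {X : Type*} [NormedAddCommGroup X] [NormedSpace ℝ X]
    (f : X → ℝ) (gf : X → X →L[ℝ] ℝ) (hconv : ConvexOn ℝ Set.univ f)
    (hgf : ∀ p v : X, HasLineDerivAt ℝ f (gf p v) p v) (z : X) :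
    fconj f (gf z) = gf z z - f z := by
  refine IsGreatest.csSup_eq ⟨⟨z, rfl⟩, ?_⟩
  rintro r ⟨u, rfl⟩
  have := subgrad_ineq f gf hconv hgf z (u - z)
  simp only [map_sub] at this
  have : gf z u - f u ≤ gf z z - f z := by
    have h2 : z + (u - z) = u := by abel
    rw [h2] at this
    linarith
  simpa using this

/-- If `∇f y = β ∇f x + (1−β) ∇f w` and the conjugate `f*` satisfies a uniform-convexity
inequality with gauge `ρ` at the points `∇f x`, `∇f w`, then for any `p` with
`D_f(p, w) ≤ D_f(p, x)` one has
`D_f(p, y) ≤ D_f(p, x) − β(1−β) ρ(‖∇f x − ∇f w‖)`; in particular `D_f(p, y) ≤ D_f(p, x)`. -/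
theorem bregman_convex_combination_estimate
    {X : Type*} [NormedAddCommGroup X] [NormedSpace ℝ X]
    (f : X → ℝ) (gf : X → X →L[ℝ] ℝ)
    (hconv : ConvexOn ℝ Set.univ f)
    (hgf : ∀ p v : X, HasLineDerivAt ℝ f (gf p v) p v)
    (x w : X) (β : ℝ) (hβ : β ∈ Set.Ioo (0 : ℝ) 1)
    (ρ : ℝ → ℝ) (hρ : ∀ t : ℝ, 0 ≤ t → 0 ≤ ρ t)
    (hgauge : fconj f (β • gf x + (1 - β) • gf w) ≤
      β * fconj f (gf x) + (1 - β) * fconj f (gf w) - β * (1 - β) * ρ ‖gf x - gf w‖)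
    (y : X) (hy : gf y = β • gf x + (1 - β) • gf w)
    (p : X) (hp : Df f gf p w ≤ Df f gf p x) :
    Df f gf p y ≤ Df f gf p x - β * (1 - β) * ρ ‖gf x - gf w‖ ∧
      Df f gf p y ≤ Df f gf p x := by
  obtain ⟨hβ0, hβ1⟩ := hβ
  have key : ∀ z : X, Df f gf p z = f p - gf z p + fconj f (gf z) := by
    intro z
    rw [fenchel_eq f gf hconv hgf z, Df]
    simp only [map_sub]
    ring
  have hρ0 : 0 ≤ ρ ‖gf x - gf w‖ := hρ _ (norm_nonneg _)
  have hmain : Df f gf p y ≤ Df f gf p x - β * (1 - β) * ρ ‖gf x - gf w‖ := by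
    rw [key x, key y, key w] at *
    rw [hy]
    have happ : (β • gf x + (1 - β) • gf w) p = β * gf x p + (1 - β) * gf w p := by
      simp
    rw [happ]
    nlinarith [hp]
  exact ⟨hmain, by nlinarith [mul_pos hβ0 (show (0:ℝ) < 1 - β by linarith), hρ0]⟩
end

section
/- Let X be a real normed space with dual X*, let C ⊆ X be a nonempty convex set, and let f : X → ℝ be convex and Gâteaux differentiable with gradient ∇f : X → X*. Fix x ∈ X and z ∈ C. Then z minimizes y ↦ D_f(y, x) over C (i.e., D_f(z, x) ≤ D_f(y, x) for all y ∈ C) if and only if ⟨∇f(x) − ∇f(z), y − z⟩ ≤ 0 for all y ∈ C. -/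
/-! The three-point identity
`D(y, x) - D(z, x) = D(y, z) + ⟨∇f(z) - ∇f(x), y - z⟩` reduces the claim to two facts.
If the variational inequality holds, both terms on the right are nonnegative, the first by
the gradient inequality for the convex `f`. Conversely, if `z` minimizes `D(·, x)` over the
convex set `C`, the directional derivative of `D(·, x)` at `z` towards any `y ∈ C`, which is
`⟨∇f(z) - ∇f(x), y - z⟩`, is nonnegative. -/

open Filter Topology

open Set

section LineDeriv

variable {E : Type*} [NormedAddCommGroup E] [NormedSpace ℝ E]

theorem ConvexOn.add_le_of_hasLineDerivAt {f : E → ℝ} {s : Set E} {x y : E} {f' : ℝ}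
    (hf : ConvexOn ℝ s f) (hx : x ∈ s) (hy : y ∈ s) (hf' : HasLineDerivAt ℝ f f' x (y - x)) :
    f x + f' ≤ f y := by
  have hline : ⇑(AffineMap.lineMap x y : ℝ →ᵃ[ℝ] E) = fun t : ℝ => x + t • (y - x) := by
    funext t
    simp [AffineMap.lineMap_apply_module', add_comm]
  have key := (hf.comp_affineMap (AffineMap.lineMap x y)).le_slope_of_hasDerivAt
    (x := 0) (y := 1) (by simpa using hx) (by simpa using hy) zero_lt_one
    (by rw [Function.comp_def, hline]; exact hf')
  simp only [slope_def_field, Function.comp_def, hline, one_smul, zero_smul, add_zero, sub_zero,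
    div_one, add_sub_cancel] at key
  linarith

theorem IsMinOn.nonneg_of_hasLineDerivAt {g : E → ℝ} {C : Set E} {y z : E} {g' : ℝ}
    (hmin : IsMinOn g C z) (hC : Convex ℝ C) (hz : z ∈ C) (hy : y ∈ C)
    (hg : HasLineDerivAt ℝ g g' z (y - z)) : 0 ≤ g' := by
  refine ge_of_tendsto hg.tendsto_slope_zero_right ?_
  filter_upwards [Ioo_mem_nhdsGT zero_lt_one] with t ht
  have hmem : z + t • (y - z) ∈ C := by
    simpa [AffineMap.lineMap_apply_module', add_comm] using
      hC.lineMap_mem hz hy ⟨ht.1.le, ht.2.le⟩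
  exact smul_nonneg (inv_nonneg.mpr ht.1.le) (sub_nonneg.mpr (hmin hmem))

end LineDeriv

section Bregman

variable {X : Type*} [NormedAddCommGroup X] [NormedSpace ℝ X] {f : X → ℝ} {gf : X → X →L[ℝ] ℝ}

theorem Df_nonneg (hf : ConvexOn ℝ univ f) {x y : X}
    (hgf : HasLineDerivAt ℝ f (gf x (y - x)) x (y - x)) : 0 ≤ Df f gf y x := by
  have := hf.add_le_of_hasLineDerivAt (mem_univ x) (mem_univ y) hgf
  unfold Df
  linarith

theorem Df_sub_Df (f : X → ℝ) (gf : X → X →L[ℝ] ℝ) (x y z : X) :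
    Df f gf y x - Df f gf z x = Df f gf y z - (gf x - gf z) (y - z) := by
  simp only [Df, sub_apply, map_sub]
  ring

theorem hasLineDerivAt_Df {x p v : X} (hgf : HasLineDerivAt ℝ f (gf p v) p v) :
    HasLineDerivAt ℝ (fun y => Df f gf y x) ((gf p - gf x) v) p v := by
  have hline : HasDerivAt (fun t : ℝ => p + t • v - x) v 0 := by
    simpa using (((hasDerivAt_id (0 : ℝ)).smul_const v).const_add p).sub_const x
  have hlin := (gf x).hasFDerivAt.comp_hasDerivAt (0 : ℝ) hline
  exact (hgf.sub_const (f x)).sub hlin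

end Bregman

theorem bregman_projection_characterization_general
    {X : Type*} [NormedAddCommGroup X] [NormedSpace ℝ X]
    (f : X → ℝ) (gf : X → X →L[ℝ] ℝ)
    (hconv : ConvexOn ℝ Set.univ f)
    (hgf : ∀ p v : X, HasLineDerivAt ℝ f (gf p v) p v)
    (C : Set X) (hCconv : Convex ℝ C)
    (x : X) (z : X) (hz : z ∈ C) :
    (∀ y ∈ C, Df f gf z x ≤ Df f gf y x) ↔
      (∀ y ∈ C, (gf x - gf z) (y - z) ≤ 0) := by
  constructor
  · intro hmin y hy
    have hderiv := (isMinOn_iff.mpr hmin).nonneg_of_hasLineDerivAt hCconv hz hy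
      (hasLineDerivAt_Df (x := x) (hgf z (y - z)))
    simp only [sub_apply] at hderiv ⊢
    linarith
  · intro hvi y hy
    have hthreePoint := Df_sub_Df f gf x y z
    have hnonneg := Df_nonneg hconv (hgf z (y - z))
    linarith [hvi y hy]

/-- Characterization of the minimizer of the Bregman distance over a convex set
by a variational inequality. -/
theorem bregman_projection_characterization
    {X : Type*} [NormedAddCommGroup X] [NormedSpace ℝ X]
    (f : X → ℝ) (gf : X → X →L[ℝ] ℝ)
    (hconv : ConvexOn ℝ Set.univ f)
    (hgf : ∀ p v : X, HasLineDerivAt ℝ f (gf p v) p v)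
    (C : Set X) (hCne : C.Nonempty) (hCconv : Convex ℝ C)
    (x : X) (z : X) (hz : z ∈ C) :
    (∀ y ∈ C, Df f gf z x ≤ Df f gf y x) ↔
      (∀ y ∈ C, (gf x - gf z) (y - z) ≤ 0) :=
  bregman_projection_characterization_general f gf hconv hgf C hCconv x z hz
end

section
/- Let X be a real normed space with dual X*, let C ⊆ X be a nonempty set, and let f : X → ℝ be Gâteaux differentiable with gradient ∇f : X → X*. Fix x ∈ X and suppose z ∈ C satisfies ⟨∇f(x) − ∇f(z), y − z⟩ ≤ 0 for all y ∈ C (in particular, z is the Bregman projection of x onto C when C is closed convex and f is convex and totally convex). Then D_f(y, z) + D_f(z, x) ≤ D_f(y, x) for all y ∈ C. -/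
open Filter Topology

/-- If `z ∈ C` satisfies the Bregman projection variational inequality at `x`, then
`D_f(y, z) + D_f(z, x) ≤ D_f(y, x)` for all `y ∈ C`. -/
theorem bregman_projection_inequality
    {X : Type*} [NormedAddCommGroup X] [NormedSpace ℝ X]
    (f : X → ℝ) (gf : X → X →L[ℝ] ℝ)
    (hgf : ∀ p v : X, HasLineDerivAt ℝ f (gf p v) p v)
    (C : Set X) (hCne : C.Nonempty)
    (x : X) (z : X) (hz : z ∈ C)
    (hvar : ∀ y ∈ C, (gf x - gf z) (y - z) ≤ 0) :
    ∀ y ∈ C, Df f gf y z + Df f gf z x ≤ Df f gf y x := by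
  intro y hy
  have h := hvar y hy
  simp only [ContinuousLinearMap.sub_apply] at h
  have e1 : y - z = (y - x) - (z - x) := by abel
  simp only [e1, map_sub] at h
  simp only [Df, e1, map_sub]
  linarith
end

section
/- Let X be a real Banach space with dual X*, and let f : X → ℝ be convex, Gâteaux differentiable with gradient ∇f : X → X*, and totally convex, i.e., ν_f(x, t) > 0 for every x ∈ X and t > 0. If x₀ ∈ X and {x_n} is a sequence in X such that the sequence of real numbers {D_f(x_n, x₀)} is bounded, then the sequence {x_n} is bounded in norm. -/
open Filter Topology

/-- The modulus of total convexity of `f` at `x`. -/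
noncomputable def totalConvexityModulus {X : Type*} [NormedAddCommGroup X] [NormedSpace ℝ X]
    (f : X → ℝ) (gf : X → X →L[ℝ] ℝ) (x : X) (t : ℝ) : ℝ :=
  sInf {d : ℝ | ∃ y : X, ‖y - x‖ = t ∧ d = Df f gf y x}

/-! `y ↦ D_f(y, x)` is convex and vanishes at `x`, so on the ray from `x` through `y` it is at
most `s · D_f(y, x)` at the point of parameter `s ∈ [0, 1]`. Taking the point at distance `1` from
`x` gives `ν_f(x, 1) · ‖y - x‖ ≤ D_f(y, x)` whenever `‖y - x‖ ≥ 1`, so a bound on `D_f(x_n, x₀)`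
bounds `‖x_n - x₀‖`. Positivity of `ν_f(x, 1)` also guarantees that the infimum defining it is
over a set bounded below, since otherwise `sInf` returns the junk value `0`. -/

section Bregman

variable {X : Type*} [NormedAddCommGroup X] [NormedSpace ℝ X] {f : X → ℝ} {gf : X → X →L[ℝ] ℝ}

@[simp]
lemma Df_self (x : X) : Df f gf x x = 0 := by
  simp [Df]

lemma convexOn_Df_left (hconv : ConvexOn ℝ Set.univ f) (x : X) :
    ConvexOn ℝ Set.univ (fun y => Df f gf y x) := by
  have hDf : (fun y => Df f gf y x) = f - ⇑(gf x) + fun _ => gf x x - f x := by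
    ext y
    simp only [Df, map_sub, Pi.add_apply, Pi.sub_apply]
    ring
  rw [hDf]
  exact (hconv.sub ((gf x).toLinearMap.concaveOn convex_univ)).add_const _

lemma Df_add_smul_sub_le (hconv : ConvexOn ℝ Set.univ f) {s : ℝ} (hs₀ : 0 ≤ s) (hs₁ : s ≤ 1)
    (x y : X) : Df f gf (x + s • (y - x)) x ≤ s * Df f gf y x := by
  have h := (convexOn_Df_left (gf := gf) hconv x).2 (Set.mem_univ y) (Set.mem_univ x) hs₀
    (sub_nonneg.mpr hs₁) (add_sub_cancel s 1)
  have hseg : s • y + (1 - s) • x = x + s • (y - x) := by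
    rw [smul_sub, sub_smul, one_smul]; abel
  simpa [hseg] using h

lemma totalConvexityModulus_le_Df {x y : X} {t : ℝ} (hpos : 0 < totalConvexityModulus f gf x t)
    (hy : ‖y - x‖ = t) : totalConvexityModulus f gf x t ≤ Df f gf y x := by
  have hbdd : BddBelow {d : ℝ | ∃ y : X, ‖y - x‖ = t ∧ d = Df f gf y x} := by
    -- an infimum over a set not bounded below is the junk value `0`
    by_contra h
    exact hpos.ne' (Real.sInf_of_not_bddBelow h)
  exact csInf_le hbdd ⟨y, hy, rfl⟩

lemma norm_sub_le_max_Df (hconv : ConvexOn ℝ Set.univ f) {x : X}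
    (hpos : 0 < totalConvexityModulus f gf x 1) (y : X) :
    ‖y - x‖ ≤ max 1 (Df f gf y x / totalConvexityModulus f gf x 1) := by
  set T := ‖y - x‖
  rcases le_or_gt T 1 with hT | hT
  · exact le_max_of_le_left hT
  refine le_max_of_le_right ((le_div_iff₀ hpos).2 ?_)
  have hT₀ : 0 < T := one_pos.trans hT
  have hunit : ‖(x + T⁻¹ • (y - x)) - x‖ = 1 := by
    rw [add_sub_cancel_left, norm_smul, norm_inv, norm_norm, inv_mul_cancel₀ hT₀.ne']
  calc T * totalConvexityModulus f gf x 1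
      ≤ T * Df f gf (x + T⁻¹ • (y - x)) x :=
        mul_le_mul_of_nonneg_left (totalConvexityModulus_le_Df hpos hunit) hT₀.le
    _ ≤ T * (T⁻¹ * Df f gf y x) :=
        mul_le_mul_of_nonneg_left
          (Df_add_smul_sub_le hconv (inv_nonneg.2 hT₀.le) (inv_le_one_of_one_le₀ hT.le) x y)
          hT₀.le
    _ = Df f gf y x := by field_simp

end Bregman

theorem bounded_of_bregman_bounded_general
    {X : Type*} [NormedAddCommGroup X] [NormedSpace ℝ X]
    (f : X → ℝ) (gf : X → X →L[ℝ] ℝ)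
    (hconv : ConvexOn ℝ Set.univ f)
    (htc : ∀ x : X, ∀ t : ℝ, 0 < t → 0 < totalConvexityModulus f gf x t)
    (x₀ : X) (x : ℕ → X)
    (hbdd : Bornology.IsBounded (Set.range fun n => Df f gf (x n) x₀)) :
    Bornology.IsBounded (Set.range x) := by
  obtain ⟨M, hM⟩ := hbdd.bddAbove
  have hpos := htc x₀ 1 one_pos
  refine (Metric.isBounded_closedBall (x := x₀)
    (r := max 1 (M / totalConvexityModulus f gf x₀ 1))).subset ?_
  rintro _ ⟨n, rfl⟩
  rw [Metric.mem_closedBall, dist_eq_norm]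
  refine (norm_sub_le_max_Df hconv hpos (x n)).trans ?_
  gcongr
  exact hM ⟨n, rfl⟩

/-- If `f` is totally convex and `{D_f(x_n, x₀)}` is bounded, then `{x_n}` is bounded. -/
theorem bounded_of_bregman_bounded
    {X : Type*} [NormedAddCommGroup X] [NormedSpace ℝ X] [CompleteSpace X]
    (f : X → ℝ) (gf : X → X →L[ℝ] ℝ)
    (hconv : ConvexOn ℝ Set.univ f)
    (hgf : ∀ p v : X, HasLineDerivAt ℝ f (gf p v) p v)
    (htc : ∀ x : X, ∀ t : ℝ, 0 < t → 0 < totalConvexityModulus f gf x t)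
    (x₀ : X) (x : ℕ → X)
    (hbdd : Bornology.IsBounded (Set.range fun n => Df f gf (x n) x₀)) :
    Bornology.IsBounded (Set.range x) :=
  bounded_of_bregman_bounded_general f gf hconv htc x₀ x hbdd
end

section
/- Let X be a real Banach space with dual X*, and let f : X → ℝ be Gâteaux differentiable with gradient ∇f : X → X*. Suppose f is bounded on bounded subsets of X and uniformly Fréchet differentiable on bounded subsets of X, i.e., for every bounded B ⊆ X, sup_{x∈B, ‖y‖=1} |f(x + t y) − f(x) − t⟨∇f(x), y⟩| / t → 0 as t → 0⁺. Then ∇f is norm-to-norm uniformly continuous on bounded subsets of X: for every bounded B ⊆ X and every ε > 0 there exists δ > 0 such that x, x' ∈ B and ‖x − x'‖ < δ imply ‖∇f(x) − ∇f(x')‖_{X*} < ε. -/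
open Set Metric Bornology

/-! A gradient that is a uniform first-order approximation of `f` is controlled by difference
quotients of `f` at a fixed scale `t`. On a bounded set this bounds `‖∇f‖` (as `f` is bounded on a
`t`-thickening), so `f` is Lipschitz near the set; and `t ⟨∇f x - ∇f x', y⟩` is, up to the two
remainders, `f (x + t y) - f (x' + t y) - (f x - f x')`, which is small once `‖x - x'‖ ≪ t`. -/

theorem HasLineDerivAt.hasDerivAt_add_smul {𝕜 E F : Type*} [NontriviallyNormedField 𝕜]
    [NormedAddCommGroup F] [NormedSpace 𝕜 F] [AddCommGroup E] [Module 𝕜 E]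
    {f : E → F} {f' : F} {w v : E} {s : 𝕜} (hf : HasLineDerivAt 𝕜 f f' (w + s • v) v) :
    HasDerivAt (fun t : 𝕜 => f (w + t • v)) f' s := by
  have h : HasDerivAt (fun t : 𝕜 => f (w + s • v + t • v)) f' (s - s) := by
    rw [sub_self]; exact hf
  have hshift : (fun t : 𝕜 => f (w + t • v)) = fun t => f (w + s • v + (t - s) • v) := by
    funext t; congr 1; module
  rw [hshift]; exact h.comp_sub_const s s

section

variable {X F : Type*} [NormedAddCommGroup X] [NormedSpace ℝ X]

theorem Convex.norm_image_sub_le_of_hasLineDerivAt [NormedAddCommGroup F] [NormedSpace ℝ F]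
    {f : X → F} {gf : X → X →L[ℝ] F} {S : Set X} {L : ℝ}
    (hgf : ∀ p ∈ S, ∀ v, HasLineDerivAt ℝ f (gf p v) p v) (hS : Convex ℝ S)
    (hL : ∀ p ∈ S, ‖gf p‖ ≤ L) {w z : X} (hw : w ∈ S) (hz : z ∈ S) :
    ‖f z - f w‖ ≤ L * ‖z - w‖ := by
  have hmem : ∀ s ∈ Icc (0 : ℝ) 1, w + s • (z - w) ∈ S := fun s hs =>
    hS.add_smul_sub_mem hw hz hs
  have hderiv : ∀ s ∈ Icc (0 : ℝ) 1, HasDerivWithinAt (fun s : ℝ => f (w + s • (z - w)))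
      (gf (w + s • (z - w)) (z - w)) (Icc 0 1) s := fun s hs =>
    (hgf _ (hmem s hs) _).hasDerivAt_add_smul.hasDerivWithinAt
  have hbound : ∀ s ∈ Ico (0 : ℝ) 1, ‖gf (w + s • (z - w)) (z - w)‖ ≤ L * ‖z - w‖ :=
    fun s hs => ((gf _).le_opNorm _).trans <|
      mul_le_mul_of_nonneg_right (hL _ (hmem s (Ico_subset_Icc_self hs))) (norm_nonneg _)
  simpa using norm_image_sub_le_of_norm_deriv_le_segment' hderiv hbound 1 (by simp)

namespace ContinuousLinearMap

theorem opNorm_le_of_abs_remainder_le (T : X →L[ℝ] ℝ) (g : X → ℝ) {p : X} {t ε M : ℝ}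
    (ht : 0 < t) (hε : 0 ≤ ε) (hM : ∀ z ∈ closedBall p t, |g z| ≤ M)
    (hR : ∀ y : X, ‖y‖ = 1 → |g (p + t • y) - g p - t * T y| ≤ ε * t) :
    ‖T‖ ≤ 2 * M / t + ε := by
  have hM₀ : 0 ≤ M := (abs_nonneg _).trans (hM p (mem_closedBall_self ht.le))
  refine (opNorm_le_of_unit_norm (by positivity) fun y hy => ?_).trans_eq
    (show (2 * M + ε * t) / t = 2 * M / t + ε by field_simp)
  have hpy : p + t • y ∈ closedBall p t := by simp [norm_smul, hy, abs_of_pos ht]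
  have h₁ := abs_le.mp (hR y hy)
  have h₂ := abs_le.mp (hM _ hpy)
  have h₃ := abs_le.mp (hM p (mem_closedBall_self ht.le))
  have key : |t * T y| ≤ 2 * M + ε * t := abs_le.mpr ⟨by linarith, by linarith⟩
  rwa [abs_mul, abs_of_pos ht, ← le_div_iff₀' ht, ← Real.norm_eq_abs] at key

theorem norm_sub_le_of_abs_remainder_le (T T' : X →L[ℝ] ℝ) (g : X → ℝ) {x x' : X} {t ε η : ℝ}
    (ht : 0 < t) (hε : 0 ≤ ε)
    (hR : ∀ y : X, ‖y‖ = 1 → |g (x + t • y) - g x - t * T y| ≤ ε * t)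
    (hR' : ∀ y : X, ‖y‖ = 1 → |g (x' + t • y) - g x' - t * T' y| ≤ ε * t)
    (hg : ∀ v : X, ‖v‖ ≤ t → |g (x + v) - g (x' + v)| ≤ η) :
    ‖T - T'‖ ≤ 2 * ε + 2 * η / t := by
  have h₀ : |g x - g x'| ≤ η := by simpa using hg 0 (by simp [ht.le])
  have hη : 0 ≤ η := (abs_nonneg _).trans h₀
  refine (opNorm_le_of_unit_norm (by positivity) fun y hy => ?_).trans_eq
    (show (2 * ε * t + 2 * η) / t = 2 * ε + 2 * η / t by field_simp)
  have h₁ := abs_le.mp (hR y hy)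
  have h₂ := abs_le.mp (hR' y hy)
  have h₃ := abs_le.mp (hg (t • y) (by simp [norm_smul, hy, abs_of_pos ht]))
  have h₄ := abs_le.mp h₀
  have key : |t * (T y - T' y)| ≤ 2 * ε * t + 2 * η := abs_le.mpr ⟨by linarith, by linarith⟩
  rwa [abs_mul, abs_of_pos ht, ← le_div_iff₀' ht, ← Real.norm_eq_abs, ← sub_apply] at key

end ContinuousLinearMap

theorem exists_pos_bound_of_abs_remainder_le {f : X → ℝ} {gf : X → X →L[ℝ] ℝ} {S : Set X}
    {t ε : ℝ} (ht : 0 < t) (hε : 0 ≤ ε) (hf : IsBounded (f '' cthickening t S))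
    (hR : ∀ x ∈ S, ∀ y : X, ‖y‖ = 1 → |f (x + t • y) - f x - t * gf x y| ≤ ε * t) :
    ∃ L > 0, ∀ p ∈ S, ‖gf p‖ ≤ L := by
  obtain ⟨M, hM₀, hM⟩ := hf.exists_pos_norm_le
  refine ⟨2 * M / t + ε, by positivity, fun p hp => ?_⟩
  refine (gf p).opNorm_le_of_abs_remainder_le f ht hε (fun z hz => ?_) (hR p hp)
  simpa [Real.norm_eq_abs] using
    hM _ (mem_image_of_mem f (closedBall_subset_cthickening hp t hz))

end

theorem gradient_uniformly_continuous_on_bounded_general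
    {X : Type*} [NormedAddCommGroup X] [NormedSpace ℝ X]
    (f : X → ℝ) (gf : X → X →L[ℝ] ℝ)
    (hgf : ∀ p v : X, HasLineDerivAt ℝ f (gf p v) p v)
    (hbdd : ∀ B : Set X, Bornology.IsBounded B → Bornology.IsBounded (f '' B))
    (hUF : ∀ B : Set X, Bornology.IsBounded B → ∀ ε : ℝ, 0 < ε → ∃ δ : ℝ, 0 < δ ∧
      ∀ t : ℝ, 0 < t → t < δ → ∀ x ∈ B, ∀ y : X, ‖y‖ = 1 →
        |f (x + t • y) - f x - t * gf x y| ≤ ε * t) :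
    ∀ B : Set X, Bornology.IsBounded B → ∀ ε : ℝ, 0 < ε → ∃ δ : ℝ, 0 < δ ∧
      ∀ x ∈ B, ∀ x' ∈ B, ‖x - x'‖ < δ → ‖gf x - gf x'‖ < ε := by
  intro B hB ε hε
  obtain ⟨δ₀, hδ₀, hR₀⟩ := hUF (cthickening 2 B) hB.cthickening 1 one_pos
  obtain ⟨L, hL, hgfL⟩ := exists_pos_bound_of_abs_remainder_le (half_pos hδ₀) zero_le_one
    (hbdd _ hB.cthickening.cthickening) (hR₀ _ (half_pos hδ₀) (half_lt_self hδ₀))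
  obtain ⟨δ₁, hδ₁, hR₁⟩ := hUF B hB (ε / 4) (by positivity)
  set t := min (δ₁ / 2) 1
  have ht : 0 < t := by positivity
  have htδ : t < δ₁ := (min_le_left _ _).trans_lt (half_lt_self hδ₁)
  refine ⟨min 1 (ε * t / (4 * L)), by positivity, fun x hx x' hx' hxx' => ?_⟩
  rw [lt_min_iff, lt_div_iff₀ (by positivity)] at hxx'
  have hlip : ∀ v : X, ‖v‖ ≤ t → |f (x + v) - f (x' + v)| ≤ L * ‖x - x'‖ := fun v hv => by
    have hv₁ : ‖v‖ ≤ 1 := hv.trans (min_le_right _ _)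
    have := (convex_closedBall x' 2).norm_image_sub_le_of_hasLineDerivAt (fun p _ v => hgf p v)
      (fun p hp => hgfL p (closedBall_subset_cthickening hx' 2 hp))
      (w := x' + v) (z := x + v) (by rw [mem_closedBall, dist_eq_norm, add_sub_cancel_left]; linarith)
      (by rw [mem_closedBall, dist_eq_norm, add_sub_right_comm]; linarith [norm_add_le (x - x') v])
    simpa [Real.norm_eq_abs] using this
  have hsmall : 2 * (L * ‖x - x'‖) / t < ε / 2 := by rw [div_lt_iff₀ ht]; linarith
  calc ‖gf x - gf x'‖ ≤ 2 * (ε / 4) + 2 * (L * ‖x - x'‖) / t :=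
        (gf x).norm_sub_le_of_abs_remainder_le (gf x') f ht (by positivity)
          (hR₁ t ht htδ x hx) (hR₁ t ht htδ x' hx') hlip
    _ < ε := by linarith

/-- If `f` is bounded on bounded subsets and uniformly Fréchet differentiable on bounded
subsets of a Banach space, then its gradient map `∇f` is norm-to-norm uniformly continuous
on bounded subsets. -/
theorem gradient_uniformly_continuous_on_bounded
    {X : Type*} [NormedAddCommGroup X] [NormedSpace ℝ X] [CompleteSpace X]
    (f : X → ℝ) (gf : X → X →L[ℝ] ℝ)
    (hgf : ∀ p v : X, HasLineDerivAt ℝ f (gf p v) p v)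
    (hbdd : ∀ B : Set X, Bornology.IsBounded B → Bornology.IsBounded (f '' B))
    (hUF : ∀ B : Set X, Bornology.IsBounded B → ∀ ε : ℝ, 0 < ε → ∃ δ : ℝ, 0 < δ ∧
      ∀ t : ℝ, 0 < t → t < δ → ∀ x ∈ B, ∀ y : X, ‖y‖ = 1 →
        |f (x + t • y) - f x - t * gf x y| ≤ ε * t) :
    ∀ B : Set X, Bornology.IsBounded B → ∀ ε : ℝ, 0 < ε → ∃ δ : ℝ, 0 < δ ∧
      ∀ x ∈ B, ∀ x' ∈ B, ‖x - x'‖ < δ → ‖gf x - gf x'‖ < ε :=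
  gradient_uniformly_continuous_on_bounded_general f gf hgf hbdd hUF
end

section
/- Let {a_n}_{n≥1} be a sequence of real numbers for which there exists a subsequence {n_i} of the indices such that a_{n_i} ≤ a_{n_i + 1} for all i (equivalently, the set {j : a_j ≤ a_{j+1}} is infinite). Then there exists a nondecreasing sequence of indices {m_k} ⊆ ℕ with m_k → ∞ such that, for all sufficiently large k, a_{m_k} ≤ a_{m_k + 1} and a_k ≤ a_{m_k + 1}; in fact one may take m_k = max{j ≤ k : a_j ≤ a_{j+1}} (for k large enough that this set is nonempty). -/
open Filter Topology

/-- Maingé's lemma: if a real sequence has infinitely many indices `j` with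
`a j ≤ a (j+1)`, then there is a nondecreasing sequence of indices `m k → ∞` such that
eventually `a (m k) ≤ a (m k + 1)` and `a k ≤ a (m k + 1)`; in fact one may take
`m k = max {j ≤ k : a j ≤ a (j+1)}` for `k` large enough. -/
theorem mainge_lemma
    (a : ℕ → ℝ)
    (h : {j : ℕ | a j ≤ a (j + 1)}.Infinite) :
    ∃ m : ℕ → ℕ, Monotone m ∧ Tendsto m atTop atTop ∧
      (∀ᶠ k in atTop,
        a (m k) ≤ a (m k + 1) ∧ a k ≤ a (m k + 1) ∧
        m k = sSup {j : ℕ | j ≤ k ∧ a j ≤ a (j + 1)}) := by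
  set S : ℕ → Set ℕ := fun k => {j : ℕ | j ≤ k ∧ a j ≤ a (j + 1)} with hS
  have hbdd : ∀ k, BddAbove (S k) := fun k => ⟨k, fun j hj => hj.1⟩
  set m : ℕ → ℕ := fun k => sSup (S k) with hm
  have hmono : Monotone m := by
    intro p q hpq
    rcases (S p).eq_empty_or_nonempty with he | hne
    · rw [hm]; simp only [he, csSup_empty, bot_eq_zero']; exact Nat.zero_le _
    · exact csSup_le_csSup (hbdd q) hne (fun j hj => ⟨hj.1.trans hpq, hj.2⟩)
  have hmem : ∀ k, (S k).Nonempty → m k ∈ S k := by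
    intro k hne
    exact Nat.sSup_mem hne (hbdd k)
  have hne : ∀ N : ℕ, ∃ j ≥ N, a j ≤ a (j + 1) := by
    intro N
    obtain ⟨j, hj1, hj2⟩ := h.exists_gt N
    exact ⟨j, hj2.le, hj1⟩
  have hbig : ∀ N : ℕ, ∀ᶠ k in atTop, N ≤ m k := by
    intro N
    obtain ⟨j, hjN, hja⟩ := hne N
    filter_upwards [eventually_ge_atTop j] with k hk
    exact hjN.trans (le_csSup (hbdd k) ⟨hk, hja⟩)
  refine ⟨m, hmono, tendsto_atTop.2 hbig, ?_⟩
  obtain ⟨j0, _, hj0a⟩ := hne 0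
  filter_upwards [eventually_ge_atTop j0] with k hk
  have hSne : (S k).Nonempty := ⟨j0, hk, hj0a⟩
  have hmk := hmem k hSne
  refine ⟨hmk.2, ?_, rfl⟩
  -- show a i ≤ a (m k + 1) for all m k + 1 ≤ i ≤ k
  have key : ∀ i, m k + 1 ≤ i → i ≤ k → a i ≤ a (m k + 1) := by
    intro i hi
    induction i, hi using Nat.le_induction with
    | base => exact fun _ => le_rfl
    | succ n hn ih =>
      intro hnk
      have hn' : n ≤ k := le_of_lt (Nat.lt_of_succ_le hnk)
      have hnotin : n ∉ S k := fun hin => by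
        have h2 := le_csSup (hbdd k) hin
        have h3 : sSup (S k) = m k := rfl
        rw [h3] at h2
        omega
      have : ¬ a n ≤ a (n + 1) := fun hle => hnotin ⟨hn', hle⟩
      exact le_trans (le_of_lt (lt_of_not_ge this)) (ih hn')
  rcases le_or_gt k (m k) with hk' | hk'
  · have : k = m k := le_antisymm hk' hmk.1
    conv_lhs => rw [this]
    exact hmk.2
  · exact key k (Nat.succ_le_of_lt hk') le_rfl
end
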